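/- Let α be a nonzero algebraic number, h ∈ ℕ×, ζ a primitive h-th root of unity, L = ℚ(α^h, ζ), K = L(α), and let h' = [K : L]. Then h' divides h, α^{h'} ∈ L, the conjugates of α over L are αξ^i for ξ a primitive h'-th root of unity and i = 0, …, h'−1, and for all a ∈ ℕ×: Tr_{K/L}(α^a) = h'α^a if h' | a and Tr_{K/L}(α^a) = 0 otherwise. Moreover α^a ∈ L if and only if h' | a. -/

import Mathlib

open IntermediateField Polynomial

/-!
Every conjugate of `α` over `L` is a root of `X ^ h - α ^ h`, hence of the form `ζ ^ k * α`
with `ζ ^ k ∈ L`. So the norm of `α`, which lies in `L`, is `α ^ h'` times a root of unity of `L`,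
giving `α ^ h' ∈ L` and `minpoly L α = X ^ h' - α ^ h'`. Bezout then shows that the exponents
`a > 0` with `α ^ a ∈ L` are exactly the multiples of `h'`; in particular `h' ∣ h`. With
`ξ = ζ ^ (h / h')` the conjugates are the `ξ ^ i * α`, and `α ↦ ξ * α` extends to an automorphism
of `L(α)/L`; it multiplies `α ^ a` by `ξ ^ a`, which is `≠ 1` unless `h' ∣ a`, so the trace of
`α ^ a` vanishes in that case.
-/

theorem Algebra.trace_eq_zero_of_algEquiv_apply_eq_smul {R S : Type*} [CommRing R] [IsDomain R]
    [CommRing S] [Algebra R S] (σ : S ≃ₐ[R] S) {x : S} {c : R} (hσ : σ x = c • x) (hc : c ≠ 1) :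
    Algebra.trace R S x = 0 := by
  have h := Algebra.trace_eq_of_algEquiv σ x
  rw [hσ, map_smul, smul_eq_mul] at h
  have : (c - 1) * Algebra.trace R S x = 0 := by rw [sub_mul, h, one_mul, sub_self]
  exact (mul_eq_zero.mp this).resolve_left (sub_ne_zero.mpr hc)

theorem IsPrimitiveRoot.pow_eq_pow_iff_exists_eq_mul_pow {R : Type*} [CommRing R] [IsDomain R]
    {n : ℕ} {ξ : R} (hξ : IsPrimitiveRoot ξ n) (hn : 0 < n) {α β : R} :
    β ^ n = α ^ n ↔ ∃ i < n, β = α * ξ ^ i := by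
  rw [← mem_nthRoots hn, hξ.nthRoots_eq rfl, Multiset.mem_map]
  simp only [Multiset.mem_range, mul_comm α, eq_comm (a := β)]

namespace IntermediateField

section AdjoinSimple

variable {K E : Type*} [Field K] [Field E] [Algebra K E] {α : E}

theorem exists_algEquiv_gen_eq (hα : IsIntegral K α) {β : E} (hβ : β ∈ K⟮α⟯)
    (hroot : aeval β (minpoly K α) = 0) :
    ∃ σ : K⟮α⟯ ≃ₐ[K] K⟮α⟯, σ (AdjoinSimple.gen K α) = ⟨β, hβ⟩ := by
  have := adjoin.finiteDimensional hα
  have hmem : (⟨β, hβ⟩ : K⟮α⟯) ∈ (minpoly K α).aroots K⟮α⟯ :=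
    mem_aroots.mpr ⟨minpoly.ne_zero hα,
      (aeval_algebraMap_eq_zero_iff_of_injective (algebraMap K⟮α⟯ E).injective).mp hroot⟩
  let f := (algHomAdjoinIntegralEquiv K hα).symm ⟨_, hmem⟩
  exact ⟨AlgEquiv.ofBijective f f.bijective, algHomAdjoinIntegralEquiv_symm_apply_gen K hα _⟩

theorem trace_gen_pow_eq_zero (hα : IsIntegral K α) {ξ : K}
    (hroot : aeval (algebraMap K E ξ * α) (minpoly K α) = 0) {a : ℕ} (ha : ξ ^ a ≠ 1) :
    Algebra.trace K K⟮α⟯ (AdjoinSimple.gen K α ^ a) = 0 := by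
  obtain ⟨σ, hσ⟩ := exists_algEquiv_gen_eq hα
    (mul_mem (algebraMap_mem _ ξ) (mem_adjoin_simple_self K α)) hroot
  refine Algebra.trace_eq_zero_of_algEquiv_apply_eq_smul σ ?_ ha
  rw [map_pow, hσ, ← _root_.smul_pow]
  exact congrArg (· ^ a) (Subtype.ext (Algebra.smul_def ξ α).symm)

end AdjoinSimple

section Kummer

variable {F E : Type*} [Field F] [Field E] [Algebra F E] {L : IntermediateField F E} {α : E}

theorem isIntegral_of_pow_mem {n : ℕ} (hn : 0 < n) (h : α ^ n ∈ L) : IsIntegral L α :=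
  .of_pow hn (isIntegral_algebraMap (x := (⟨α ^ n, h⟩ : L)))

theorem pow_gcd_mem_of_pow_mem (hα : α ≠ 0) {a b : ℕ} (ha : α ^ a ∈ L) (hb : α ^ b ∈ L) :
    α ^ a.gcd b ∈ L := by
  have : α ^ (a.gcd b : ℤ) = (α ^ a) ^ a.gcdA b * (α ^ b) ^ a.gcdB b := by
    rw [Nat.gcd_eq_gcd_ab, zpow_add₀ hα, zpow_mul, zpow_mul, zpow_natCast, zpow_natCast]
  rw [← zpow_natCast, this]
  exact mul_mem (zpow_mem ha _) (zpow_mem hb _)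

theorem natDegree_minpoly_le_of_pow_mem {m : ℕ} (hm : 0 < m) (h : α ^ m ∈ L) :
    (minpoly L α).natDegree ≤ m := by
  have := minpoly.min L α (monic_X_pow_sub_C (⟨α ^ m, h⟩ : L) hm.ne') (by simp)
  simpa using natDegree_le_natDegree this

theorem natDegree_minpoly_dvd_of_pow_mem (hα : α ≠ 0) (hd : α ^ (minpoly L α).natDegree ∈ L)
    {m : ℕ} (hm : 0 < m) (h : α ^ m ∈ L) : (minpoly L α).natDegree ∣ m := by
  have hpos := minpoly.natDegree_pos (isIntegral_of_pow_mem hm h)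
  have hgcd : (minpoly L α).natDegree.gcd m = (minpoly L α).natDegree :=
    le_antisymm (Nat.le_of_dvd hpos (Nat.gcd_dvd_left _ _))
      (natDegree_minpoly_le_of_pow_mem (Nat.gcd_pos_of_pos_right _ hm)
        (pow_gcd_mem_of_pow_mem hα hd h))
  exact hgcd ▸ Nat.gcd_dvd_right _ m

theorem minpoly_eq_X_pow_sub_C (hint : IsIntegral L α) (hd : α ^ (minpoly L α).natDegree ∈ L) :
    minpoly L α = X ^ (minpoly L α).natDegree - C ⟨_, hd⟩ :=
  (eq_of_monic_of_dvd_of_natDegree_le (minpoly.monic hint)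
    (monic_X_pow_sub_C _ (minpoly.natDegree_pos hint).ne')
    (minpoly.dvd L α (by simp)) natDegree_X_pow_sub_C.le).symm

theorem pow_natDegree_minpoly_mem {n : ℕ} (hn : 0 < n) {ζ : E} (hζ : IsPrimitiveRoot ζ n)
    (hζL : ζ ∈ L) (hα : α ≠ 0) (hαn : α ^ n ∈ L) : α ^ (minpoly L α).natDegree ∈ L := by
  have := NeZero.of_pos hn
  set d := (minpoly L α).natDegree
  have hne : X ^ n - C (α ^ n) ≠ 0 := X_pow_sub_C_ne_zero hn _
  have hdvd : (minpoly L α).map (algebraMap L E) ∣ X ^ n - C (α ^ n) := by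
    have := map_dvd (algebraMap L E) (minpoly.dvd L α (p := X ^ n - C ⟨α ^ n, hαn⟩) (by simp))
    rwa [Polynomial.map_sub, Polynomial.map_pow, map_X, map_C] at this
  have hsplit : ((minpoly L α).map (algebraMap L E)).Splits :=
    (X_pow_sub_C_splits_of_isPrimitiveRoot hζ rfl).of_dvd hne hdvd
  have hroots : ∀ r ∈ (minpoly L α).aroots E, r ^ n = α ^ n := fun r hr ↦ by
    simpa [sub_eq_zero] using (mem_roots hne).mp (Multiset.mem_of_le (roots.le_of_dvd hne hdvd) hr)
  have hcard : Multiset.card ((minpoly L α).aroots E) = d := by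
    rw [aroots, splits_iff_card_roots.mp hsplit, natDegree_map]
  set N := algebraMap L E (Algebra.norm L (AdjoinSimple.gen L α))
  have hN : N ^ n = (α ^ d) ^ n := by
    rw [show N = _ from AdjoinSimple.norm_gen_eq_prod_roots α hsplit,
      ← Multiset.map_id ((minpoly L α).aroots E), ← Multiset.prod_map_pow,
      Multiset.map_congr (f := fun r ↦ id r ^ n) rfl hroots, Multiset.map_const',
      Multiset.prod_replicate, hcard, ← pow_mul, ← pow_mul, mul_comm]
  obtain ⟨j, -, hj⟩ := hζ.eq_pow_of_pow_eq_one (ξ := N / α ^ d)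
    (by rw [div_pow, hN, div_self (pow_ne_zero _ (pow_ne_zero _ hα))])
  have : α ^ d = N / ζ ^ j := by
    rw [eq_div_iff (pow_ne_zero _ (hζ.ne_zero hn.ne')), hj]
    field_simp
  rw [this]
  exact div_mem (SetLike.coe_mem _) (pow_mem hζL j)

theorem aeval_minpoly_eq_zero_iff (hint : IsIntegral L α) (hd : α ^ (minpoly L α).natDegree ∈ L)
    {ξ : E} (hξ : IsPrimitiveRoot ξ (minpoly L α).natDegree) {β : E} :
    aeval β (minpoly L α) = 0 ↔ ∃ i < (minpoly L α).natDegree, β = α * ξ ^ i := by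
  rw [← hξ.pow_eq_pow_iff_exists_eq_mul_pow (minpoly.natDegree_pos hint),
    minpoly_eq_X_pow_sub_C hint hd]
  simp [sub_eq_zero]

theorem coe_trace_gen_pow (hint : IsIntegral L α) (hd : α ^ (minpoly L α).natDegree ∈ L)
    {ξ : E} (hξ : IsPrimitiveRoot ξ (minpoly L α).natDegree) (hξL : ξ ∈ L) (a : ℕ) :
    ((Algebra.trace L L⟮α⟯ (AdjoinSimple.gen L α ^ a) : L) : E) =
      if (minpoly L α).natDegree ∣ a then ((minpoly L α).natDegree : E) * α ^ a else 0 := by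
  split_ifs with hda
  · obtain ⟨b, rfl⟩ := hda
    have hmem : α ^ ((minpoly L α).natDegree * b) ∈ L := pow_mul α _ b ▸ pow_mem hd b
    have hgen : AdjoinSimple.gen L α ^ ((minpoly L α).natDegree * b) =
        algebraMap L L⟮α⟯ ⟨_, hmem⟩ := rfl
    rw [hgen, Algebra.trace_algebraMap, adjoin.finrank hint]
    simp
  · have hroot : aeval (algebraMap L E ⟨ξ, hξL⟩ * α) (minpoly L α) = 0 := by
      rw [minpoly_eq_X_pow_sub_C hint hd]
      simp [mul_pow, hξ.pow_eq_one]
    have hne : (⟨ξ, hξL⟩ : L) ^ a ≠ 1 := fun h ↦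
      hda ((hξ.pow_eq_one_iff_dvd a).mp (congrArg Subtype.val h))
    rw [trace_gen_pow_eq_zero hint hroot hne, ZeroMemClass.coe_zero]

end Kummer

end IntermediateField

theorem kummer_cyclotomic_general (α : ℂ) (hα : α ≠ 0)
    (h : ℕ) (hh : 0 < h) (ζ : ℂ) (hζ : IsPrimitiveRoot ζ h)
    (L : IntermediateField ℚ ℂ) (hL : L = IntermediateField.adjoin ℚ {α ^ h, ζ})
    (h' : ℕ) (hh' : h' = Module.finrank L (IntermediateField.adjoin L {α})) :
    h' ∣ h ∧
    α ^ h' ∈ L ∧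
    (∃ ξ : ℂ, IsPrimitiveRoot ξ h' ∧
      ∀ β : ℂ, Polynomial.aeval β (minpoly L α) = 0 ↔ ∃ i < h', β = α * ξ ^ i) ∧
    (∀ a : ℕ, 0 < a →
      ((Algebra.trace L (IntermediateField.adjoin L {α})
          ((IntermediateField.AdjoinSimple.gen L α) ^ a) : L) : ℂ) =
        if h' ∣ a then (h' : ℂ) * α ^ a else 0) ∧
    (∀ a : ℕ, 0 < a → (α ^ a ∈ L ↔ h' ∣ a)) := by
  have hζL : ζ ∈ L := hL ▸ subset_adjoin ℚ _ (by simp)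
  have hαhL : α ^ h ∈ L := hL ▸ subset_adjoin ℚ _ (by simp)
  have hint : IsIntegral L α := isIntegral_of_pow_mem hh hαhL
  obtain rfl : h' = (minpoly L α).natDegree := hh'.trans (adjoin.finrank hint)
  have hαd := pow_natDegree_minpoly_mem hh hζ hζL hα hαhL
  have hdvd := natDegree_minpoly_dvd_of_pow_mem hα hαd hh hαhL
  have hξ := hζ.pow hh (Nat.div_mul_cancel hdvd).symm
  refine ⟨hdvd, hαd, ⟨_, hξ, fun β ↦ aeval_minpoly_eq_zero_iff hint hαd hξ⟩,
    fun a _ ↦ coe_trace_gen_pow hint hαd hξ (pow_mem hζL _) a, fun a ha ↦ ⟨?_, ?_⟩⟩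
  · exact natDegree_minpoly_dvd_of_pow_mem hα hαd ha
  · rintro ⟨b, rfl⟩
    exact pow_mul α _ b ▸ pow_mem hαd b

/-- Lemma 8 (lemzerotrace): let `α ≠ 0` be algebraic, `h ∈ ℕ×`, `ζ` a primitive `h`-th root
of unity, `L = ℚ(α^h, ζ)`, `K = L(α)`, `h' = [K : L]`. Then `h' ∣ h`, `α^{h'} ∈ L`, the
conjugates of `α` over `L` are exactly the `α ξ^i` for `ξ` a primitive `h'`-th root of unity
and `0 ≤ i < h'`, `Tr_{K/L}(α^a) = h' α^a` if `h' ∣ a` and `0` otherwise, and `α^a ∈ L`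
iff `h' ∣ a`. -/
theorem kummer_cyclotomic (α : ℂ) (hα : α ≠ 0) (halg : IsAlgebraic ℚ α)
    (h : ℕ) (hh : 0 < h) (ζ : ℂ) (hζ : IsPrimitiveRoot ζ h)
    (L : IntermediateField ℚ ℂ) (hL : L = IntermediateField.adjoin ℚ {α ^ h, ζ})
    (h' : ℕ) (hh' : h' = Module.finrank L (IntermediateField.adjoin L {α})) :
    h' ∣ h ∧
    α ^ h' ∈ L ∧
    (∃ ξ : ℂ, IsPrimitiveRoot ξ h' ∧
      ∀ β : ℂ, Polynomial.aeval β (minpoly L α) = 0 ↔ ∃ i < h', β = α * ξ ^ i) ∧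
    (∀ a : ℕ, 0 < a →
      ((Algebra.trace L (IntermediateField.adjoin L {α})
          ((IntermediateField.AdjoinSimple.gen L α) ^ a) : L) : ℂ) =
        if h' ∣ a then (h' : ℂ) * α ^ a else 0) ∧
    (∀ a : ℕ, 0 < a → (α ^ a ∈ L ↔ h' ∣ a)) :=
  kummer_cyclotomic_general α hα h hh ζ hζ L hL h' hh'
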